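/- arXiv:hep-th/9608015 — 2 statements merged into one kernel-verified Lean document; each statement's English description precedes it below -/
import Mathlib

section
/- Let n ≥ 1 and let f, h ∈ Mₙ(ℂ) with f invertible, satisfying i(f† h − h† f) = 1ₙ. Set N := h f⁻¹ and let Im N := (N − N†)/(2i) denote its anti-hermitian part. Then f† (Im N) f = −(1/2)·1ₙ; equivalently Im N = −(1/2)(f f†)⁻¹. In particular Im N is an invertible, negative definite hermitian matrix. -/
open scoped Matrix ComplexOrder

/-!
Congruence by `f` turns `N − N†` into `f†h − h†f`, which the section condition fixes to `−i`;
hence `f† (Im N) f = −½`, and `Im N = −½ (f f†)⁻¹` is minus half the inverse of the positive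
definite matrix `f f†`.
-/

namespace Matrix

variable {ι α : Type*} [Fintype ι] [DecidableEq ι] [CommRing α] [StarRing α]

theorem conjTranspose_mul_mul_inv_sub_conjTranspose_mul {f : Matrix ι ι α} (hf : IsUnit f)
    (h : Matrix ι ι α) : fᴴ * (h * f⁻¹ - (h * f⁻¹)ᴴ) * f = fᴴ * h - hᴴ * f := by
  have hinv : f⁻¹ * f = 1 := nonsing_inv_mul f ((isUnit_iff_isUnit_det f).mp hf)
  rw [Matrix.mul_sub, Matrix.sub_mul, conjTranspose_mul, Matrix.mul_assoc fᴴ, Matrix.mul_assoc h,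
    hinv, Matrix.mul_one, ← Matrix.mul_assoc fᴴ, ← conjTranspose_mul, hinv, conjTranspose_one,
    Matrix.one_mul]

theorem eq_smul_inv_mul_conjTranspose_of_conjTranspose_mul_mul_eq {f A : Matrix ι ι α}
    (hf : IsUnit f) {c : α} (hA : fᴴ * A * f = c • 1) : A = c • (f * fᴴ)⁻¹ := by
  have hdet : IsUnit f.det := (isUnit_iff_isUnit_det f).mp hf
  have hdetH : IsUnit fᴴ.det := by rw [det_conjTranspose]; exact hdet.star
  calc A = fᴴ⁻¹ * (fᴴ * A * f) * f⁻¹ := by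
        rw [Matrix.mul_assoc, Matrix.mul_assoc, mul_nonsing_inv f hdet, Matrix.mul_one,
          nonsing_inv_mul_cancel_left _ _ hdetH]
    _ = c • (f * fᴴ)⁻¹ := by
        rw [hA, Matrix.mul_smul, Matrix.smul_mul, Matrix.mul_one, mul_inv_rev]

end Matrix

open Matrix

theorem kinetic_matrix_imaginary_part_general
    {n : ℕ}
    (f h : Matrix (Fin n) (Fin n) ℂ)
    (hf : IsUnit f)
    (hsec : Complex.I • (fᴴ * h - hᴴ * f) = 1)
    (N ImN : Matrix (Fin n) (Fin n) ℂ)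
    (hN : N = h * f⁻¹)
    (hImN : ImN = (2 * Complex.I)⁻¹ • (N - Nᴴ)) :
    fᴴ * ImN * f = -(1 / 2 : ℂ) • 1 ∧
    ImN = -(1 / 2 : ℂ) • (f * fᴴ)⁻¹ ∧
    IsUnit ImN ∧ ImN.IsHermitian ∧ (-ImN).PosDef := by
  have hsec' : fᴴ * h - hᴴ * f = -Complex.I • 1 := by
    rw [← hsec, smul_smul, neg_mul, Complex.I_mul_I, neg_neg, one_smul]
  have hcongr : fᴴ * ImN * f = -(1 / 2 : ℂ) • 1 := by
    rw [hImN, hN, Matrix.mul_smul, Matrix.smul_mul,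
      conjTranspose_mul_mul_inv_sub_conjTranspose_mul hf, hsec', smul_smul]
    congr 1
    field_simp
  have hImN_eq := eq_smul_inv_mul_conjTranspose_of_conjTranspose_mul_mul_eq hf hcongr
  have hpos : (-ImN).PosDef := by
    rw [hImN_eq, neg_smul, neg_neg]
    exact (PosDef.mul_conjTranspose_self f (vecMul_injective_of_isUnit hf)).inv.smul
      (by norm_num)
  exact ⟨hcongr, hImN_eq, by simpa using hpos.isUnit.neg, by simpa using hpos.isHermitian.neg,
    hpos⟩

/-- **The imaginary part of the kinetic matrix is fixed by the section condition.**
If `i(f†h − h†f) = 1` with `f` invertible and `N = h f⁻¹`, then the anti-hermitian part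
`Im N = (N − N†)/(2i)` satisfies `f† (Im N) f = −½·1`, equivalently
`Im N = −½ (f f†)⁻¹`; in particular `Im N` is invertible, hermitian and negative
definite. -/
theorem kinetic_matrix_imaginary_part
    {n : ℕ} (hn : 1 ≤ n)
    (f h : Matrix (Fin n) (Fin n) ℂ)
    (hf : IsUnit f)
    (hsec : Complex.I • (fᴴ * h - hᴴ * f) = 1)
    (N ImN : Matrix (Fin n) (Fin n) ℂ)
    (hN : N = h * f⁻¹)
    (hImN : ImN = (2 * Complex.I)⁻¹ • (N - Nᴴ)) :
    fᴴ * ImN * f = -(1 / 2 : ℂ) • 1 ∧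
    ImN = -(1 / 2 : ℂ) • (f * fᴴ)⁻¹ ∧
    IsUnit ImN ∧ ImN.IsHermitian ∧ (-ImN).PosDef :=
  kinetic_matrix_imaginary_part_general f h hf hsec N ImN hN hImN
end

section
/- Let n ≥ 1 and let f, h ∈ Mₙ(ℂ) with f invertible, satisfying i(f† h − h† f) = 1ₙ and fᵀ h = hᵀ f. Set N := h f⁻¹, R := Re N = (N + conj(N))/2, I := Im N = (N − conj(N))/(2i) (so N is symmetric and I is invertible). Let g, e ∈ ℝⁿ and define the charge vector Z := fᵀ e − hᵀ g ∈ ℂⁿ and the symplectic charge vector P := (g; e) ∈ ℝ²ⁿ. Define the 2n×2n real symmetric matrix M := [[I + R I⁻¹ R, −R I⁻¹],[−I⁻¹ R, I⁻¹]]. Then the sum rule Z† Z = −(1/2) Pᵀ M P holds, i.e. Σ_k |Z_k|² = −(1/2) [ gᵀ(I + R I⁻¹ R)g − 2 eᵀ I⁻¹ R g + eᵀ I⁻¹ e ]. -/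
/-!
Since `N = h f⁻¹` is symmetric, `hᵀ = fᵀ N`, so `Z = fᵀ v` with `v = e − N g = u − i I g` and
`u = e − R g`. The section condition says `f† I f = −½`, i.e. `I⁻¹ = −2 f f†`, hence
`Z†Z = vᵀ f f† v̄ = −½ vᵀ I⁻¹ v̄ = −½ (uᵀ I⁻¹ u + gᵀ I g)`; the imaginary cross terms cancel
because `I` is symmetric. On the other side `M = Lᵀ diag(I, I⁻¹) L` with `L = [[1, 0], [−R, 1]]`
and `L P = (g, u)`, which gives the same quadratic form.
-/

open scoped Matrix

namespace Matrix

variable {l m n α : Type*}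

section CommRing

variable [CommRing α]

theorem isSymm_mul_inv_of_transpose_mul_eq [Fintype n] [DecidableEq n] {f h : Matrix n n α}
    (hf : IsUnit f) (hfh : fᵀ * h = hᵀ * f) : (h * f⁻¹).IsSymm := by
  have hdet : IsUnit f.det := (isUnit_iff_isUnit_det f).mp hf
  have hdetT : IsUnit fᵀ.det := by rwa [det_transpose]
  calc (h * f⁻¹)ᵀ = fᵀ⁻¹ * (hᵀ * f) * f⁻¹ := by
        rw [transpose_mul, transpose_nonsing_inv, Matrix.mul_assoc,
          mul_nonsing_inv_cancel_right _ _ hdet]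
    _ = h * f⁻¹ := by rw [← hfh, nonsing_inv_mul_cancel_left _ _ hdetT]

theorem fromBlocks_eq_transpose_mul_fromBlocks_mul [Fintype m] [Fintype n] [DecidableEq m]
    [DecidableEq n] (A : Matrix n n α) (B : Matrix m m α) (R : Matrix m n α) :
    fromBlocks (A + Rᵀ * B * R) (-(Rᵀ * B)) (-(B * R)) B =
      (fromBlocks 1 0 (-R) 1)ᵀ * fromBlocks A 0 0 B * fromBlocks 1 0 (-R) 1 := by
  simp [fromBlocks_transpose, fromBlocks_multiply, Matrix.mul_assoc]

theorem dotProduct_transpose_mul_mul_mulVec [Fintype l] [Fintype m] (L : Matrix l m α)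
    (D : Matrix l l α) (x : m → α) :
    x ⬝ᵥ (Lᵀ * D * L) *ᵥ x = (L *ᵥ x) ⬝ᵥ D *ᵥ (L *ᵥ x) := by
  rw [← mulVec_mulVec, ← mulVec_mulVec, dotProduct_mulVec, vecMul_transpose]

theorem sumElim_dotProduct_fromBlocks_mulVec_sumElim [Fintype m] [Fintype n] [DecidableEq m]
    [DecidableEq n] (A : Matrix n n α) (B : Matrix m m α) (R : Matrix m n α) (g : n → α)
    (e : m → α) :
    Sum.elim g e ⬝ᵥ fromBlocks (A + Rᵀ * B * R) (-(Rᵀ * B)) (-(B * R)) B *ᵥ Sum.elim g e =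
      g ⬝ᵥ A *ᵥ g + (e - R *ᵥ g) ⬝ᵥ B *ᵥ (e - R *ᵥ g) := by
  rw [fromBlocks_eq_transpose_mul_fromBlocks_mul, dotProduct_transpose_mul_mul_mulVec,
    fromBlocks_mulVec, fromBlocks_mulVec]
  simp [sumElim_dotProduct_sumElim, sub_eq_neg_add, neg_mulVec]

variable [StarRing α]

theorem star_transpose_mulVec_dotProduct [Fintype m] [Fintype n] (f : Matrix m n α)
    (v : m → α) : star (fᵀ *ᵥ v) ⬝ᵥ fᵀ *ᵥ v = v ⬝ᵥ (f * fᴴ) *ᵥ star v := by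
  rw [dotProduct_comm, star_mulVec, mulVec_transpose, ← dotProduct_mulVec, ← mulVec_mulVec,
    conjTranspose_transpose_eq_transpose_conjTranspose, vecMul_transpose]

theorem mul_smul_mul_conjTranspose_eq_one [Fintype n] [DecidableEq n] {f A : Matrix n n α}
    {c : α} (hf : IsUnit f) (hA : c • (fᴴ * A * f) = 1) : A * (c • (f * fᴴ)) = 1 := by
  have hdet : IsUnit fᴴ.det := (isUnit_iff_isUnit_det _).mp ((isUnit_conjTranspose f).mpr hf)
  calc A * (c • (f * fᴴ)) = fᴴ⁻¹ * (c • (fᴴ * A * f)) * fᴴ := by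
        simp only [Matrix.mul_smul, Matrix.smul_mul, Matrix.mul_assoc,
          nonsing_inv_mul_cancel_left _ _ hdet]
    _ = 1 := by rw [hA, Matrix.mul_one, nonsing_inv_mul _ hdet]

end CommRing

theorem IsSymm.conjTranspose_eq_map_star [Star α] {N : Matrix n n α} (hN : N.IsSymm) :
    Nᴴ = N.map star := by
  rw [← hN.eq, transpose_conjTranspose, hN.eq]

theorem star_mulVec_ofReal [Fintype n] (N : Matrix m n ℂ) (g : n → ℝ) :
    star (N *ᵥ fun i => (g i : ℂ)) = N.map (starRingEnd ℂ) *ᵥ fun i => (g i : ℂ) := by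
  funext i
  simpa [Function.comp_def] using RingHom.map_mulVec (starRingEnd ℂ) N (fun i => (g i : ℂ)) i

theorem re_add_I_smul_im (N : Matrix m n ℂ) :
    (1 / 2 : ℂ) • (N + N.map (starRingEnd ℂ)) +
      Complex.I • ((2 * Complex.I)⁻¹ • (N - N.map (starRingEnd ℂ))) = N := by
  match_scalars <;> field_simp <;> ring

theorem re_sub_I_smul_im (N : Matrix m n ℂ) :
    (1 / 2 : ℂ) • (N + N.map (starRingEnd ℂ)) -
      Complex.I • ((2 * Complex.I)⁻¹ • (N - N.map (starRingEnd ℂ))) = N.map (starRingEnd ℂ) := by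
  match_scalars <;> field_simp <;> ring

theorem IsSymm.im_mul_neg_two_smul_mul_conjTranspose_eq_one [Fintype n] [DecidableEq n]
    {N f : Matrix n n ℂ} (hN : N.IsSymm) (hf : IsUnit f)
    (hsec : Complex.I • (fᴴ * (N * f) - (N * f)ᴴ * f) = 1) :
    (2 * Complex.I)⁻¹ • (N - N.map (starRingEnd ℂ)) * ((-2 : ℂ) • (f * fᴴ)) = 1 := by
  refine mul_smul_mul_conjTranspose_eq_one hf ?_
  have hNH : Nᴴ = N.map (starRingEnd ℂ) := hN.conjTranspose_eq_map_star
  rw [← hsec]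
  simp only [conjTranspose_mul, hNH, Matrix.smul_mul, Matrix.mul_smul, Matrix.mul_sub,
    Matrix.sub_mul, Matrix.mul_assoc, smul_smul]
  match_scalars <;> field_simp <;> simp [Complex.I_sq]

theorem sub_I_smul_dotProduct_inv_mulVec_add_I_smul [Fintype n] [DecidableEq n]
    {J : Matrix n n ℂ} (hJ : J.IsSymm) (hJJ : J * J⁻¹ = 1) (u g : n → ℂ) :
    (u - Complex.I • J *ᵥ g) ⬝ᵥ J⁻¹ *ᵥ (u + Complex.I • J *ᵥ g) =
      u ⬝ᵥ J⁻¹ *ᵥ u + g ⬝ᵥ J *ᵥ g := by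
  have hinv : J⁻¹ *ᵥ J *ᵥ g = g := by rw [mulVec_mulVec, mul_eq_one_comm.mp hJJ, one_mulVec]
  have hcross : (J *ᵥ g) ⬝ᵥ J⁻¹ *ᵥ u = g ⬝ᵥ u := by
    rw [← hJ.eq, mulVec_transpose, ← dotProduct_mulVec, mulVec_mulVec, hJ.eq, hJJ, one_mulVec]
  simp only [mulVec_add, mulVec_smul, hinv, dotProduct_add, sub_dotProduct, smul_dotProduct,
    dotProduct_smul, hcross, smul_eq_mul]
  rw [dotProduct_comm (J *ᵥ g) g, dotProduct_comm u g]
  linear_combination -(g ⬝ᵥ J *ᵥ g) * Complex.I_mul_I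

end Matrix

open Matrix

theorem central_charge_sum_rule_D4_general
    {n : ℕ}
    (f h : Matrix (Fin n) (Fin n) ℂ)
    (hf : IsUnit f)
    (hsec : Complex.I • (fᴴ * h - hᴴ * f) = 1)
    (hsymp : fᵀ * h = hᵀ * f)
    (N R I : Matrix (Fin n) (Fin n) ℂ)
    (hN : N = h * f⁻¹)
    (hR : R = (1 / 2 : ℂ) • (N + N.map (starRingEnd ℂ)))
    (hI : I = (2 * Complex.I)⁻¹ • (N - N.map (starRingEnd ℂ)))
    (g e : Fin n → ℝ)
    (Z : Fin n → ℂ)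
    (hZ : Z = fᵀ.mulVec (fun i => (e i : ℂ)) - hᵀ.mulVec (fun i => (g i : ℂ)))
    (P : Fin n ⊕ Fin n → ℂ)
    (hP : P = Sum.elim (fun i => (g i : ℂ)) (fun i => (e i : ℂ)))
    (M : Matrix (Fin n ⊕ Fin n) (Fin n ⊕ Fin n) ℂ)
    (hM : M = Matrix.fromBlocks (I + R * I⁻¹ * R) (-(R * I⁻¹)) (-(I⁻¹ * R)) I⁻¹) :
    star Z ⬝ᵥ Z = -(1 / 2 : ℂ) * (P ⬝ᵥ M.mulVec P) := by
  set gc : Fin n → ℂ := fun i => (g i : ℂ)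
  set ec : Fin n → ℂ := fun i => (e i : ℂ)
  have hNf : h = N * f := by
    rw [hN, nonsing_inv_mul_cancel_right _ _ ((isUnit_iff_isUnit_det f).mp hf)]
  have hNsymm : N.IsSymm := hN ▸ isSymm_mul_inv_of_transpose_mul_eq hf hsymp
  have hRsymm : R.IsSymm := hR ▸ ((hNsymm.add (hNsymm.map _)).smul _)
  have hIsymm : I.IsSymm := hI ▸ ((hNsymm.sub (hNsymm.map _)).smul _)
  have hIff : I * ((-2 : ℂ) • (f * fᴴ)) = 1 :=
    hI ▸ hNsymm.im_mul_neg_two_smul_mul_conjTranspose_eq_one hf (hNf ▸ hsec)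
  have hIinv : I⁻¹ = (-2 : ℂ) • (f * fᴴ) := inv_eq_right_inv hIff
  have hv : ec - N *ᵥ gc = (ec - R *ᵥ gc) - Complex.I • I *ᵥ gc := by
    rw [← re_add_I_smul_im N, ← hR, ← hI, add_mulVec, smul_mulVec, sub_add_eq_sub_sub]
  have hv' : star (ec - N *ᵥ gc) = (ec - R *ᵥ gc) + Complex.I • I *ᵥ gc := by
    have hec : star ec = ec := funext fun i => Complex.conj_ofReal (e i)
    rw [star_sub, hec, star_mulVec_ofReal, ← re_sub_I_smul_im N, ← hR, ← hI, sub_mulVec,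
      smul_mulVec, ← sub_add]
  calc star Z ⬝ᵥ Z = (ec - N *ᵥ gc) ⬝ᵥ (f * fᴴ) *ᵥ star (ec - N *ᵥ gc) := by
        rw [hZ, hNf, transpose_mul, hNsymm.eq, ← mulVec_mulVec, ← mulVec_sub,
          star_transpose_mulVec_dotProduct]
    _ = -(1 / 2) * ((ec - N *ᵥ gc) ⬝ᵥ I⁻¹ *ᵥ star (ec - N *ᵥ gc)) := by
        rw [hIinv, smul_mulVec, dotProduct_smul, smul_eq_mul, ← mul_assoc]; norm_num
    _ = -(1 / 2) * (gc ⬝ᵥ I *ᵥ gc + (ec - R *ᵥ gc) ⬝ᵥ I⁻¹ *ᵥ (ec - R *ᵥ gc)) := by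
        rw [hv', hv, sub_I_smul_dotProduct_inv_mulVec_add_I_smul hIsymm (hIinv ▸ hIff), add_comm]
    _ = -(1 / 2 : ℂ) * (P ⬝ᵥ M.mulVec P) := by
        have hquad := sumElim_dotProduct_fromBlocks_mulVec_sumElim I I⁻¹ R gc ec
        rw [hRsymm.eq] at hquad
        rw [hP, hM, hquad]

/-- **The D = 4 sum rule for central and matter charges.**
With coset representatives `(f, h)` satisfying the section conditions, kinetic matrix
`N = h f⁻¹` with real part `R` and imaginary part `I`, charges `Z = fᵀe − hᵀg`, symplectic
charge vector `P = (g; e)` and `M = [[I + R I⁻¹ R, −R I⁻¹],[−I⁻¹ R, I⁻¹]]`, one has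
`Z† Z = −½ Pᵀ M P`. -/
theorem central_charge_sum_rule_D4
    {n : ℕ} (hn : 1 ≤ n)
    (f h : Matrix (Fin n) (Fin n) ℂ)
    (hf : IsUnit f)
    (hsec : Complex.I • (fᴴ * h - hᴴ * f) = 1)
    (hsymp : fᵀ * h = hᵀ * f)
    (N R I : Matrix (Fin n) (Fin n) ℂ)
    (hN : N = h * f⁻¹)
    (hR : R = (1 / 2 : ℂ) • (N + N.map (starRingEnd ℂ)))
    (hI : I = (2 * Complex.I)⁻¹ • (N - N.map (starRingEnd ℂ)))
    (g e : Fin n → ℝ)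
    (Z : Fin n → ℂ)
    (hZ : Z = fᵀ.mulVec (fun i => (e i : ℂ)) - hᵀ.mulVec (fun i => (g i : ℂ)))
    (P : Fin n ⊕ Fin n → ℂ)
    (hP : P = Sum.elim (fun i => (g i : ℂ)) (fun i => (e i : ℂ)))
    (M : Matrix (Fin n ⊕ Fin n) (Fin n ⊕ Fin n) ℂ)
    (hM : M = Matrix.fromBlocks (I + R * I⁻¹ * R) (-(R * I⁻¹)) (-(I⁻¹ * R)) I⁻¹) :
    star Z ⬝ᵥ Z = -(1 / 2 : ℂ) * (P ⬝ᵥ M.mulVec P) :=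
  central_charge_sum_rule_D4_general f h hf hsec hsymp N R I hN hR hI g e Z hZ P hP M hM
end
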